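/- Let ε ∈ (0,1] and λ ≥ 3. There is a constant C > 0 depending only on λ (independent of ε) with the following property. Let u ∈ C⁴([0,1]) satisfy u(0)=u'(0)=u(1)=u'(1)=0 and set v := ε^{3/2}u''. Let V_h be a real linear subspace of pairs (w,z) with w ∈ C²([0,1]) satisfying w(0)=w'(0)=w(1)=w'(1)=0 and z ∈ C²([0,1]), and let (u_h,v_h) ∈ V_h satisfy the Galerkin orthogonality B((u−u_h, v−v_h),(w,z)) = 0 for all (w,z) ∈ V_h. Then ⦀(u−u_h, v−v_h)⦀ ≤ C · inf over (u*,v*) ∈ V_h of ⦀(u−u*, v−v*)⦀, and moreover ⦀(u−u_h, v−v_h)⦀ ≤ C[ inf over u* with (u*,0) ∈ V_h of (‖u−u*‖ + ε^{3/2}‖(u−u*)''‖) + C ε^{3/2} inf over v* with (0,v*) ∈ V_h of (‖u''−v*‖ + ε²‖u⁽⁴⁾ − v*''‖) ] whenever V_h = V_h^u × V_h^v is a product of subspaces. -/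

import Mathlib

open MeasureTheory Set Real

noncomputable section

/-- L²(0,1) inner product. -/
def L2ip (f g : ℝ → ℝ) : ℝ := ∫ x in (0:ℝ)..1, f x * g x

/-- Square of the L²(0,1) norm. -/
def L2nsq (f : ℝ → ℝ) : ℝ := ∫ x in (0:ℝ)..1, (f x)^2

/-- L²(0,1) norm. -/
def L2nrm (f : ℝ → ℝ) : ℝ := Real.sqrt (L2nsq f)

/-- k-th derivative within [0,1]. -/
def Dn (k : ℕ) (f : ℝ → ℝ) : ℝ → ℝ := iteratedDerivWithin k f (Icc (0:ℝ) 1)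

/-- The bilinear form B. -/
def Bform (ε lam : ℝ) (u v us vs : ℝ → ℝ) : ℝ :=
  lam * L2ip (fun x => v x - ε ^ ((3:ℝ)/2) * Dn 2 u x)
             (fun x => vs x - ε ^ ((3:ℝ)/2) * Dn 2 us x)
  + L2ip (fun x => ε ^ ((5:ℝ)/2) * Dn 2 v x + 4 * u x)
         (fun x => ε ^ ((3:ℝ)/2) * Dn 2 vs x + 4 * us x)

/-- The balanced norm. -/
def bal (ε : ℝ) (u v : ℝ → ℝ) : ℝ :=
  Real.sqrt (L2nsq u + ε^3 * L2nsq (Dn 2 u) + L2nsq v + ε^4 * L2nsq (Dn 2 v))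

/-- Clamped boundary conditions u(0)=u'(0)=u(1)=u'(1)=0. -/
def ClampedBC (u : ℝ → ℝ) : Prop :=
  u 0 = 0 ∧ Dn 1 u 0 = 0 ∧ u 1 = 0 ∧ Dn 1 u 1 = 0

/-!
Write `a = ε^{3/2}`, so that `ε^{5/2} = ε a`. For clamped `w` and `p`, integrating by parts twice
moves the second derivatives off `w` and `p` in the cross terms, and then
`B((w,z),(p,q)) = λ⟨z - a w'', q - a p''⟩ + ε⁴⟨z'', q''⟩ + 4εa⟨z, p''⟩ + 4a⟨w'', q⟩ + 16⟨w, p⟩`.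
Every pairing on the right is controlled by the balanced norm, so `B` is bounded with constant
`2λ + 25` uniformly in `ε`; on the diagonal the cross term `4(1+ε)a⟨z, w''⟩` is absorbed by
`λ‖z - a w''‖²` as soon as `λ ≥ 3`, so `B(x,x) ≥ ⦀x⦀²`. Céa's argument gives the first estimate,
and the second is the first one applied to the competitor `(u*, a v*)`.
-/

open intervalIntegral

section L2

variable {f f' g g' f₁ f₂ g₁ g₂ : ℝ → ℝ}

lemma L2ip_congr (hf : EqOn f f' (Icc 0 1)) (hg : EqOn g g' (Icc 0 1)) :
    L2ip f g = L2ip f' g' :=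
  integral_congr fun x hx => by
    rw [uIcc_of_le zero_le_one] at hx
    simp only [hf hx, hg hx]

lemma L2ip_comm (f g : ℝ → ℝ) : L2ip f g = L2ip g f := by
  simp only [L2ip, mul_comm]

lemma L2ip_self (f : ℝ → ℝ) : L2ip f f = L2nsq f := by
  simp only [L2ip, L2nsq, sq]

lemma L2nsq_nonneg (f : ℝ → ℝ) : 0 ≤ L2nsq f :=
  integral_nonneg zero_le_one fun _ _ => sq_nonneg _

lemma L2nrm_nonneg (f : ℝ → ℝ) : 0 ≤ L2nrm f := sqrt_nonneg _

lemma sq_L2nrm (f : ℝ → ℝ) : L2nrm f ^ 2 = L2nsq f :=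
  sq_sqrt (L2nsq_nonneg f)

lemma L2nrm_congr (h : EqOn f g (Icc 0 1)) : L2nrm f = L2nrm g := by
  rw [L2nrm, L2nrm, ← L2ip_self, ← L2ip_self, L2ip_congr h h]

lemma L2nrm_const_mul (c : ℝ) (f : ℝ → ℝ) : L2nrm (fun x => c * f x) = |c| * L2nrm f := by
  rw [L2nrm, L2nrm, ← sqrt_sq_eq_abs, ← sqrt_mul (sq_nonneg c), L2nsq, L2nsq,
    ← intervalIntegral.integral_const_mul]
  simp only [mul_pow]

lemma L2ip_add_right (hf : ContinuousOn f (Icc 0 1)) (hg₁ : ContinuousOn g₁ (Icc 0 1))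
    (hg₂ : ContinuousOn g₂ (Icc 0 1)) :
    L2ip f (fun x => g₁ x + g₂ x) = L2ip f g₁ + L2ip f g₂ := by
  simp only [L2ip, mul_add]
  exact integral_add ((hf.mul hg₁).intervalIntegrable_of_Icc zero_le_one)
    ((hf.mul hg₂).intervalIntegrable_of_Icc zero_le_one)

lemma L2ip_const_mul_right (c : ℝ) (f g : ℝ → ℝ) :
    L2ip f (fun x => c * g x) = c * L2ip f g := by
  rw [L2ip, L2ip, ← intervalIntegral.integral_const_mul]
  simp only [mul_left_comm]

lemma L2ip_add_left (hf₁ : ContinuousOn f₁ (Icc 0 1)) (hf₂ : ContinuousOn f₂ (Icc 0 1))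
    (hg : ContinuousOn g (Icc 0 1)) :
    L2ip (fun x => f₁ x + f₂ x) g = L2ip f₁ g + L2ip f₂ g := by
  rw [L2ip_comm, L2ip_add_right hg hf₁ hf₂, L2ip_comm g, L2ip_comm g]

lemma L2ip_const_mul_left (c : ℝ) (f g : ℝ → ℝ) :
    L2ip (fun x => c * f x) g = c * L2ip f g := by
  rw [L2ip_comm, L2ip_const_mul_right, L2ip_comm]

lemma L2ip_lincomb (c₁ c₂ d₁ d₂ : ℝ) (hf₁ : ContinuousOn f₁ (Icc 0 1))
    (hf₂ : ContinuousOn f₂ (Icc 0 1)) (hg₁ : ContinuousOn g₁ (Icc 0 1))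
    (hg₂ : ContinuousOn g₂ (Icc 0 1)) :
    L2ip (fun x => c₁ * f₁ x + c₂ * f₂ x) (fun x => d₁ * g₁ x + d₂ * g₂ x)
      = c₁ * d₁ * L2ip f₁ g₁ + c₁ * d₂ * L2ip f₁ g₂
        + c₂ * d₁ * L2ip f₂ g₁ + c₂ * d₂ * L2ip f₂ g₂ := by
  rw [L2ip_add_left (by fun_prop) (by fun_prop) (by fun_prop), L2ip_const_mul_left,
    L2ip_const_mul_left, L2ip_add_right hf₁ (by fun_prop) (by fun_prop),
    L2ip_add_right hf₂ (by fun_prop) (by fun_prop)]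
  simp only [L2ip_const_mul_right]
  ring

lemma L2nsq_sub_const_mul (c : ℝ) (hf : ContinuousOn f (Icc 0 1))
    (hg : ContinuousOn g (Icc 0 1)) :
    L2nsq (fun x => f x - c * g x) = L2nsq f - 2 * c * L2ip f g + c ^ 2 * L2nsq g := by
  have h : (fun x => f x - c * g x) = fun x => 1 * f x + (-c) * g x := by
    funext x; ring
  rw [← L2ip_self, h, L2ip_lincomb _ _ _ _ hf hg hf hg, L2ip_self, L2ip_self, L2ip_comm g f]
  ring

lemma L2nsq_sub_const_mul_le (c : ℝ) (hf : ContinuousOn f (Icc 0 1))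
    (hg : ContinuousOn g (Icc 0 1)) :
    L2nsq (fun x => f x - c * g x) ≤ 2 * L2nsq f + 2 * c ^ 2 * L2nsq g := by
  have hplus := L2nsq_nonneg (fun x => f x - (-c) * g x)
  rw [L2nsq_sub_const_mul _ hf hg] at hplus ⊢
  linarith

theorem L2ip_le_L2nrm_mul_L2nrm (hf : ContinuousOn f (Icc 0 1))
    (hg : ContinuousOn g (Icc 0 1)) : L2ip f g ≤ L2nrm f * L2nrm g := by
  have hquad : ∀ t : ℝ, 0 ≤ L2nsq g * (t * t) + 2 * L2ip f g * t + L2nsq f := by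
    intro t
    have := L2nsq_nonneg (fun x => f x - (-t) * g x)
    rw [L2nsq_sub_const_mul _ hf hg] at this
    linarith
  have hsq : L2ip f g ^ 2 ≤ L2nsq f * L2nsq g := by
    have := discrim_le_zero hquad
    rw [discrim] at this
    linarith
  calc L2ip f g ≤ |L2ip f g| := le_abs_self _
    _ ≤ √(L2nsq f * L2nsq g) := abs_le_sqrt hsq
    _ = L2nrm f * L2nrm g := sqrt_mul (L2nsq_nonneg f) _

lemma mul_mul_L2ip_le {c d X Y : ℝ} (hf : ContinuousOn f (Icc 0 1))
    (hg : ContinuousOn g (Icc 0 1)) (hc : 0 ≤ c) (hd : 0 ≤ d)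
    (hX : c * L2nrm f ≤ X) (hY : d * L2nrm g ≤ Y) : c * d * L2ip f g ≤ X * Y :=
  calc c * d * L2ip f g ≤ c * d * (L2nrm f * L2nrm g) :=
        mul_le_mul_of_nonneg_left (L2ip_le_L2nrm_mul_L2nrm hf hg) (mul_nonneg hc hd)
    _ = (c * L2nrm f) * (d * L2nrm g) := by ring
    _ ≤ X * Y := mul_le_mul hX hY (mul_nonneg hd (sqrt_nonneg _))
        ((mul_nonneg hc (sqrt_nonneg _)).trans hX)

end L2

section Derivatives

variable {f g : ℝ → ℝ}

lemma Dn_Dn (m k : ℕ) (f : ℝ → ℝ) : Dn m (Dn k f) = Dn (m + k) f := by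
  have iterate (j : ℕ) (g : ℝ → ℝ) :
      Dn j g = (fun h : ℝ → ℝ => derivWithin h (Icc 0 1))^[j] g :=
    funext fun _ => iteratedDerivWithin_eq_iterate
  rw [iterate, iterate, iterate, Function.iterate_add_apply]

lemma Dn_const_mul (k : ℕ) (c : ℝ) (f : ℝ → ℝ) :
    Dn k (fun x => c * f x) = fun x => c * Dn k f x :=
  funext fun _ => iteratedDerivWithin_const_mul_field c f

lemma Dn_add {k : ℕ} (hf : ContDiffOn ℝ k f (Icc 0 1)) (hg : ContDiffOn ℝ k g (Icc 0 1))
    {x : ℝ} (hx : x ∈ Icc (0:ℝ) 1) : Dn k (fun y => f y + g y) x = Dn k f x + Dn k g x :=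
  iteratedDerivWithin_fun_add hx uniqueDiffOn_Icc_zero_one (hf x hx) (hg x hx)

lemma Dn_sub {k : ℕ} (hf : ContDiffOn ℝ k f (Icc 0 1)) (hg : ContDiffOn ℝ k g (Icc 0 1))
    {x : ℝ} (hx : x ∈ Icc (0:ℝ) 1) : Dn k (fun y => f y - g y) x = Dn k f x - Dn k g x :=
  iteratedDerivWithin_sub hx uniqueDiffOn_Icc_zero_one (hf x hx) (hg x hx)

lemma ContDiffOn.contDiffOn_Dn {n m k : ℕ} (hf : ContDiffOn ℝ n f (Icc 0 1)) (h : m + k ≤ n) :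
    ContDiffOn ℝ m (Dn k f) (Icc 0 1) := by
  rw [Dn, iteratedDerivWithin_eq_equiv_comp]
  exact ContDiffOn.continuousLinearMap_comp
    ((ContinuousMultilinearMap.piFieldEquiv ℝ (Fin k) ℝ).symm.toContinuousLinearEquiv :
      (ℝ [×k]→L[ℝ] ℝ) →L[ℝ] ℝ)
    (fun x hx => (hf x hx).iteratedFDerivWithin_right uniqueDiffOn_Icc_zero_one
      (by exact_mod_cast h) hx)

lemma ContDiffOn.continuousOn_Dn {n k : ℕ} (hf : ContDiffOn ℝ n f (Icc 0 1)) (h : k ≤ n) :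
    ContinuousOn (Dn k f) (Icc 0 1) :=
  hf.continuousOn_iteratedDerivWithin (by exact_mod_cast h) uniqueDiffOn_Icc_zero_one

lemma ContDiffOn.hasDerivWithinAt_Dn {n k : ℕ} (hf : ContDiffOn ℝ n f (Icc 0 1))
    (h : k + 1 ≤ n) {x : ℝ} (hx : x ∈ Icc (0:ℝ) 1) :
    HasDerivWithinAt (Dn k f) (Dn (k + 1) f x) (Icc 0 1) x := by
  simp only [Dn]
  rw [iteratedDerivWithin_succ]
  exact (hf.differentiableOn_iteratedDerivWithin (by exact_mod_cast h)
    uniqueDiffOn_Icc_zero_one x hx).hasDerivWithinAt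

lemma ClampedBC.sub (hf : ContDiffOn ℝ 1 f (Icc 0 1)) (hg : ContDiffOn ℝ 1 g (Icc 0 1))
    (hbf : ClampedBC f) (hbg : ClampedBC g) : ClampedBC (fun x => f x - g x) := by
  obtain ⟨hf0, hf0', hf1, hf1'⟩ := hbf
  obtain ⟨hg0, hg0', hg1, hg1'⟩ := hbg
  refine ⟨by simp [hf0, hg0], ?_, by simp [hf1, hg1], ?_⟩
  · rw [Dn_sub hf hg (left_mem_Icc.2 zero_le_one), hf0', hg0', sub_zero]
  · rw [Dn_sub hf hg (right_mem_Icc.2 zero_le_one), hf1', hg1', sub_zero]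

theorem L2ip_Dn_two_right_of_clampedBC {w q : ℝ → ℝ} (hw : ContDiffOn ℝ 2 w (Icc 0 1))
    (hq : ContDiffOn ℝ 2 q (Icc 0 1)) (hbc : ClampedBC w) :
    L2ip w (Dn 2 q) = L2ip (Dn 2 w) q := by
  obtain ⟨hw0, hw0', hw1, hw1'⟩ := hbc
  have hderiv : ∀ {f : ℝ → ℝ}, ContDiffOn ℝ 2 f (Icc 0 1) → ∀ k ≤ 1, ∀ x ∈ uIcc (0:ℝ) 1,
      HasDerivWithinAt (Dn k f) (Dn (k + 1) f x) (uIcc 0 1) x := by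
    intro f hf k hk x hx
    rw [uIcc_of_le zero_le_one] at hx ⊢
    exact hf.hasDerivWithinAt_Dn (n := 2) (by omega) hx
  have hint : ∀ {f : ℝ → ℝ}, ContDiffOn ℝ 2 f (Icc 0 1) → ∀ k ≤ 2,
      IntervalIntegrable (Dn k f) volume 0 1 := fun hf k hk =>
    (hf.continuousOn_Dn hk).intervalIntegrable_of_Icc zero_le_one
  have first := integral_mul_deriv_eq_deriv_mul_of_hasDerivWithinAt
    (hderiv hw 0 zero_le_one) (hderiv hq 1 le_rfl) (hint hw 1 one_le_two) (hint hq 2 le_rfl)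
  have second := integral_mul_deriv_eq_deriv_mul_of_hasDerivWithinAt
    (hderiv hw 1 le_rfl) (hderiv hq 0 zero_le_one) (hint hw 2 le_rfl) (hint hq 1 one_le_two)
  simp only [Dn, iteratedDerivWithin_zero] at first second hw0' hw1'
  simp only [L2ip, Dn, first, second, hw0, hw1, hw0', hw1']
  ring

end Derivatives

section BalancedNorm

variable {ε : ℝ} {w z : ℝ → ℝ}

lemma rpow_three_halves_sq (hε : 0 ≤ ε) : (ε ^ ((3:ℝ)/2)) ^ 2 = ε ^ 3 := by
  rw [← rpow_natCast, ← rpow_mul hε]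
  norm_num

lemma rpow_five_halves (hε : 0 ≤ ε) : ε ^ ((5:ℝ)/2) = ε * ε ^ ((3:ℝ)/2) := by
  rw [show (5:ℝ)/2 = 1 + 3/2 by norm_num, rpow_add' hε (by norm_num), rpow_one]

lemma bal_nonneg (ε : ℝ) (w z : ℝ → ℝ) : 0 ≤ bal ε w z := sqrt_nonneg _

lemma sq_bal (hε : 0 ≤ ε) (w z : ℝ → ℝ) :
    bal ε w z ^ 2 = L2nsq w + ε ^ 3 * L2nsq (Dn 2 w) + L2nsq z + ε ^ 4 * L2nsq (Dn 2 z) :=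
  sq_sqrt <| add_nonneg (add_nonneg (add_nonneg (L2nsq_nonneg w)
    (mul_nonneg (pow_nonneg hε 3) (L2nsq_nonneg _))) (L2nsq_nonneg z))
    (mul_nonneg (pow_nonneg hε 4) (L2nsq_nonneg _))

lemma bal_eq_sqrt (hε : 0 ≤ ε) (w z : ℝ → ℝ) :
    bal ε w z = √(L2nrm w ^ 2 + (ε ^ ((3:ℝ)/2) * L2nrm (Dn 2 w)) ^ 2 + L2nrm z ^ 2
      + (ε ^ 2 * L2nrm (Dn 2 z)) ^ 2) := by
  simp only [bal, mul_pow, sq_L2nrm, rpow_three_halves_sq hε, ← pow_mul]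

lemma L2nrm_le_bal (hε : 0 ≤ ε) (w z : ℝ → ℝ) :
    L2nrm w ≤ bal ε w z ∧ ε ^ ((3:ℝ)/2) * L2nrm (Dn 2 w) ≤ bal ε w z ∧
      L2nrm z ≤ bal ε w z ∧ ε ^ 2 * L2nrm (Dn 2 z) ≤ bal ε w z := by
  rw [bal_eq_sqrt hε]
  refine ⟨le_sqrt_of_sq_le ?_, le_sqrt_of_sq_le ?_, le_sqrt_of_sq_le ?_, le_sqrt_of_sq_le ?_⟩ <;>
    nlinarith [sq_nonneg (L2nrm w), sq_nonneg (ε ^ ((3:ℝ)/2) * L2nrm (Dn 2 w)),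
      sq_nonneg (L2nrm z), sq_nonneg (ε ^ 2 * L2nrm (Dn 2 z))]

lemma bal_le_add (hε : 0 ≤ ε) (w z : ℝ → ℝ) :
    bal ε w z ≤ L2nrm w + ε ^ ((3:ℝ)/2) * L2nrm (Dn 2 w) + L2nrm z
      + ε ^ 2 * L2nrm (Dn 2 z) := by
  have h₁ := L2nrm_nonneg w
  have h₂ := mul_nonneg (rpow_nonneg hε ((3:ℝ)/2)) (L2nrm_nonneg (Dn 2 w))
  have h₃ := L2nrm_nonneg z
  have h₄ := mul_nonneg (pow_nonneg hε 2) (L2nrm_nonneg (Dn 2 z))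
  rw [bal_eq_sqrt hε, sqrt_le_left (by linarith)]
  nlinarith [mul_nonneg h₁ h₂, mul_nonneg h₁ h₃, mul_nonneg h₁ h₄, mul_nonneg h₂ h₃,
    mul_nonneg h₂ h₄, mul_nonneg h₃ h₄]

lemma L2nrm_sub_le_bal (hε : 0 ≤ ε) (hw : ContDiffOn ℝ 2 w (Icc 0 1))
    (hz : ContinuousOn z (Icc 0 1)) :
    L2nrm (fun x => z x - ε ^ ((3:ℝ)/2) * Dn 2 w x) ≤ √2 * bal ε w z := by
  rw [L2nrm, ← sqrt_sq (bal_nonneg ε w z), ← sqrt_mul zero_le_two]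
  refine sqrt_le_sqrt ((L2nsq_sub_const_mul_le _ hz (hw.continuousOn_Dn le_rfl)).trans ?_)
  rw [sq_bal hε, rpow_three_halves_sq hε]
  nlinarith [L2nsq_nonneg w, L2nsq_nonneg (Dn 2 z), pow_nonneg hε 4]

lemma bal_interpolant_le {f v : ℝ → ℝ} (hε : 0 ≤ ε) (hf : ContDiffOn ℝ 2 f (Icc 0 1))
    (hv : ContDiffOn ℝ 2 v (Icc 0 1)) (w : ℝ → ℝ) :
    bal ε w (fun x => ε ^ ((3:ℝ)/2) * f x - (ε ^ ((3:ℝ)/2) • v) x)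
      ≤ L2nrm w + ε ^ ((3:ℝ)/2) * L2nrm (Dn 2 w)
        + ε ^ ((3:ℝ)/2) * (L2nrm (fun x => f x - v x)
          + ε ^ 2 * L2nrm (fun x => Dn 2 f x - Dn 2 v x)) := by
  have h : (fun x => ε ^ ((3:ℝ)/2) * f x - (ε ^ ((3:ℝ)/2) • v) x)
      = fun x => ε ^ ((3:ℝ)/2) * (f x - v x) := by
    funext x
    simp only [Pi.smul_apply, smul_eq_mul, mul_sub]
  refine (bal_le_add hε w _).trans_eq ?_
  rw [h, Dn_const_mul, L2nrm_const_mul, L2nrm_const_mul, abs_of_nonneg (rpow_nonneg hε _),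
    L2nrm_congr fun x hx => Dn_sub hf hv hx]
  ring

end BalancedNorm

section GalerkinForm

variable {ε lam : ℝ} {w z p q : ℝ → ℝ}

lemma Bform_add_right {p₁ q₁ p₂ q₂ : ℝ → ℝ} (hw : ContDiffOn ℝ 2 w (Icc 0 1))
    (hz : ContDiffOn ℝ 2 z (Icc 0 1)) (hp₁ : ContDiffOn ℝ 2 p₁ (Icc 0 1))
    (hq₁ : ContDiffOn ℝ 2 q₁ (Icc 0 1)) (hp₂ : ContDiffOn ℝ 2 p₂ (Icc 0 1))
    (hq₂ : ContDiffOn ℝ 2 q₂ (Icc 0 1)) :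
    Bform ε lam w z (fun x => p₁ x + p₂ x) (fun x => q₁ x + q₂ x)
      = Bform ε lam w z p₁ q₁ + Bform ε lam w z p₂ q₂ := by
  have hw' := hw.continuousOn
  have hz' := hz.continuousOn
  have hW := hw.continuousOn_Dn le_rfl
  have hZ := hz.continuousOn_Dn le_rfl
  have hP₁ := hp₁.continuousOn_Dn le_rfl
  have hP₂ := hp₂.continuousOn_Dn le_rfl
  have hQ₁ := hq₁.continuousOn_Dn le_rfl
  have hQ₂ := hq₂.continuousOn_Dn le_rfl
  have hp₁' := hp₁.continuousOn
  have hp₂' := hp₂.continuousOn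
  have hq₁' := hq₁.continuousOn
  have hq₂' := hq₂.continuousOn
  set a := ε ^ ((3:ℝ)/2)
  have first : L2ip (fun x => z x - a * Dn 2 w x)
      (fun x => (q₁ x + q₂ x) - a * Dn 2 (fun x => p₁ x + p₂ x) x)
      = L2ip (fun x => z x - a * Dn 2 w x) (fun x => q₁ x - a * Dn 2 p₁ x)
        + L2ip (fun x => z x - a * Dn 2 w x) (fun x => q₂ x - a * Dn 2 p₂ x) := by
    rw [← L2ip_add_right (by fun_prop) (by fun_prop) (by fun_prop)]
    exact L2ip_congr (fun _ _ => rfl) fun x hx => by simp only [Dn_add hp₁ hp₂ hx]; ring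
  have second : L2ip (fun x => ε ^ ((5:ℝ)/2) * Dn 2 z x + 4 * w x)
      (fun x => a * Dn 2 (fun x => q₁ x + q₂ x) x + 4 * (p₁ x + p₂ x))
      = L2ip (fun x => ε ^ ((5:ℝ)/2) * Dn 2 z x + 4 * w x) (fun x => a * Dn 2 q₁ x + 4 * p₁ x)
        + L2ip (fun x => ε ^ ((5:ℝ)/2) * Dn 2 z x + 4 * w x)
          (fun x => a * Dn 2 q₂ x + 4 * p₂ x) := by
    rw [← L2ip_add_right (by fun_prop) (by fun_prop) (by fun_prop)]
    exact L2ip_congr (fun _ _ => rfl) fun x hx => by simp only [Dn_add hq₁ hq₂ hx]; ring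
  rw [Bform, Bform, Bform, first, second]
  ring

lemma Bform_eq_of_clampedBC (hε : 0 ≤ ε) (hw : ContDiffOn ℝ 2 w (Icc 0 1))
    (hz : ContDiffOn ℝ 2 z (Icc 0 1)) (hp : ContDiffOn ℝ 2 p (Icc 0 1))
    (hq : ContDiffOn ℝ 2 q (Icc 0 1)) (hbw : ClampedBC w) (hbp : ClampedBC p) :
    Bform ε lam w z p q
      = lam * L2ip (fun x => z x - ε ^ ((3:ℝ)/2) * Dn 2 w x)
          (fun x => q x - ε ^ ((3:ℝ)/2) * Dn 2 p x)
        + ε ^ 2 * ε ^ 2 * L2ip (Dn 2 z) (Dn 2 q)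
        + 4 * ε * ε ^ ((3:ℝ)/2) * L2ip z (Dn 2 p)
        + 4 * ε ^ ((3:ℝ)/2) * L2ip (Dn 2 w) q + 16 * L2ip w p := by
  rw [Bform, L2ip_lincomb _ _ _ _ (hz.continuousOn_Dn le_rfl) hw.continuousOn
      (hq.continuousOn_Dn le_rfl) hp.continuousOn,
    L2ip_comm (Dn 2 z) p, L2ip_Dn_two_right_of_clampedBC hp hz hbp, L2ip_comm (Dn 2 p) z,
    L2ip_Dn_two_right_of_clampedBC hw hq hbw, rpow_five_halves hε]
  linear_combination (ε * L2ip (Dn 2 z) (Dn 2 q)) * rpow_three_halves_sq hε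

theorem sq_bal_le_Bform (hε₀ : 0 ≤ ε) (hε₁ : ε ≤ 1) (hlam : 3 ≤ lam)
    (hw : ContDiffOn ℝ 2 w (Icc 0 1)) (hz : ContDiffOn ℝ 2 z (Icc 0 1)) (hbw : ClampedBC w) :
    bal ε w z ^ 2 ≤ Bform ε lam w z w z := by
  set a := ε ^ ((3:ℝ)/2)
  have hW := hw.continuousOn_Dn le_rfl
  have hdiff := L2nsq_nonneg (fun x => z x - a * Dn 2 w x)
  have hsum := L2nsq_nonneg (fun x => z x - (-a) * Dn 2 w x)
  rw [L2nsq_sub_const_mul _ hz.continuousOn hW] at hdiff hsum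
  rw [Bform_eq_of_clampedBC hε₀ hw hz hw hz hbw hbw, L2ip_self, L2ip_self, L2ip_self,
    L2nsq_sub_const_mul _ hz.continuousOn hW, L2ip_comm (Dn 2 w) z, sq_bal hε₀,
    ← rpow_three_halves_sq hε₀]
  -- `B(x,x) - ⦀x⦀² = 15‖w‖² + ((2λ-3-2ε)‖z - a w''‖² + (1+2ε)‖z + a w''‖²) / 2`
  nlinarith [mul_nonneg (show 0 ≤ 2 * lam - 3 - 2 * ε by linarith) hdiff,
    mul_nonneg (show 0 ≤ 1 + 2 * ε by linarith) hsum, L2nsq_nonneg w]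

theorem Bform_le_bal_mul_bal (hε₀ : 0 ≤ ε) (hε₁ : ε ≤ 1) (hlam : 0 ≤ lam)
    (hw : ContDiffOn ℝ 2 w (Icc 0 1)) (hz : ContDiffOn ℝ 2 z (Icc 0 1))
    (hp : ContDiffOn ℝ 2 p (Icc 0 1)) (hq : ContDiffOn ℝ 2 q (Icc 0 1))
    (hbw : ClampedBC w) (hbp : ClampedBC p) :
    Bform ε lam w z p q ≤ (2 * lam + 25) * (bal ε w z * bal ε p q) := by
  set a := ε ^ ((3:ℝ)/2)
  have ha : 0 ≤ a := rpow_nonneg hε₀ _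
  have hw' := hw.continuousOn
  have hz' := hz.continuousOn
  have hp' := hp.continuousOn
  have hq' := hq.continuousOn
  have hW := hw.continuousOn_Dn le_rfl
  have hZ := hz.continuousOn_Dn le_rfl
  have hP := hp.continuousOn_Dn le_rfl
  have hQ := hq.continuousOn_Dn le_rfl
  obtain ⟨hw₀, hw₂, hz₀, hz₂⟩ := L2nrm_le_bal hε₀ w z
  obtain ⟨hp₀, hp₂, hq₀, hq₂⟩ := L2nrm_le_bal hε₀ p q
  have hlam_term := mul_mul_L2ip_le (c := 1) (d := 1) (by fun_prop) (by fun_prop) zero_le_one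
    zero_le_one ((one_mul _).trans_le (L2nrm_sub_le_bal hε₀ hw hz'))
    ((one_mul _).trans_le (L2nrm_sub_le_bal hε₀ hp hq'))
  have hZQ := mul_mul_L2ip_le hZ hQ (by positivity) (by positivity) hz₂ hq₂
  have hzP := mul_mul_L2ip_le (c := 4 * ε) (X := 4 * bal ε w z) hz' hP (by positivity) ha
    (by nlinarith [L2nrm_nonneg z]) hp₂
  have hWq := mul_mul_L2ip_le (c := 4 * a) (d := 1) (X := 4 * bal ε w z) hW hq'
    (by positivity) zero_le_one (by linarith) ((one_mul _).trans_le hq₀)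
  have hwp := mul_mul_L2ip_le (c := 16) (d := 1) (X := 16 * bal ε w z) hw' hp'
    (by positivity) zero_le_one (by linarith) ((one_mul _).trans_le hp₀)
  rw [mul_mul_mul_comm, mul_self_sqrt zero_le_two, one_mul, one_mul] at hlam_term
  rw [Bform_eq_of_clampedBC hε₀ hw hz hp hq hbw hbp]
  linarith [mul_le_mul_of_nonneg_left hlam_term hlam]

theorem bal_le_of_Bform_sub_eq_zero (hε₀ : 0 ≤ ε) (hε₁ : ε ≤ 1) (hlam : 3 ≤ lam)
    (hw : ContDiffOn ℝ 2 w (Icc 0 1)) (hz : ContDiffOn ℝ 2 z (Icc 0 1))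
    (hp : ContDiffOn ℝ 2 p (Icc 0 1)) (hq : ContDiffOn ℝ 2 q (Icc 0 1))
    (hbw : ClampedBC w) (hbp : ClampedBC p)
    (horth : Bform ε lam w z (fun x => w x - p x) (fun x => z x - q x) = 0) :
    bal ε w z ≤ (2 * lam + 25) * bal ε p q := by
  have hsplit : Bform ε lam w z w z = Bform ε lam w z p q := by
    have h := Bform_add_right (ε := ε) (lam := lam) hw hz hp hq (hw.sub hp) (hz.sub hq)
    simp only [add_sub_cancel] at h
    rw [h, horth, add_zero]
  have hsq : bal ε w z * bal ε w z ≤ ((2 * lam + 25) * bal ε p q) * bal ε w z :=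
    calc bal ε w z * bal ε w z = bal ε w z ^ 2 := (sq _).symm
      _ ≤ Bform ε lam w z w z := sq_bal_le_Bform hε₀ hε₁ hlam hw hz hbw
      _ = Bform ε lam w z p q := hsplit
      _ ≤ (2 * lam + 25) * (bal ε w z * bal ε p q) :=
        Bform_le_bal_mul_bal hε₀ hε₁ (by linarith) hw hz hp hq hbw hbp
      _ = ((2 * lam + 25) * bal ε p q) * bal ε w z := by ring
  rcases (bal_nonneg ε w z).eq_or_lt with h | h
  · rw [← h]
    exact mul_nonneg (by linarith) (bal_nonneg ε p q)
  · exact le_of_mul_le_mul_right hsq h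

end GalerkinForm

theorem bal_galerkin_error_le {ε lam : ℝ} (hε₀ : 0 ≤ ε) (hε₁ : ε ≤ 1) (hlam : 3 ≤ lam)
    {u : ℝ → ℝ} (hu : ContDiffOn ℝ 4 u (Icc 0 1)) (hbu : ClampedBC u)
    {Vh : Submodule ℝ ((ℝ → ℝ) × (ℝ → ℝ))}
    (hVh : ∀ wz ∈ Vh, ContDiffOn ℝ 2 wz.1 (Icc 0 1) ∧ ClampedBC wz.1 ∧
      ContDiffOn ℝ 2 wz.2 (Icc 0 1))
    {uh vh : ℝ → ℝ} (hmem : (uh, vh) ∈ Vh)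
    (hGal : ∀ wz ∈ Vh, Bform ε lam (fun x => u x - uh x)
      (fun x => ε ^ ((3:ℝ)/2) * Dn 2 u x - vh x) wz.1 wz.2 = 0)
    {us vs : ℝ → ℝ} (hs : (us, vs) ∈ Vh) :
    bal ε (fun x => u x - uh x) (fun x => ε ^ ((3:ℝ)/2) * Dn 2 u x - vh x)
      ≤ (2 * lam + 25) * bal ε (fun x => u x - us x)
          (fun x => ε ^ ((3:ℝ)/2) * Dn 2 u x - vs x) := by
  have hu₂ : ContDiffOn ℝ 2 u (Icc 0 1) := hu.of_le (by norm_num)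
  have hU : ContDiffOn ℝ 2 (Dn 2 u) (Icc 0 1) := hu.contDiffOn_Dn (by norm_num)
  obtain ⟨huh, hbuh, hvh⟩ := hVh _ hmem
  obtain ⟨hus, hbus, hvs⟩ := hVh _ hs
  refine bal_le_of_Bform_sub_eq_zero hε₀ hε₁ hlam (hu₂.sub huh)
    ((contDiffOn_const.mul hU).sub hvh) (hu₂.sub hus) ((contDiffOn_const.mul hU).sub hvs)
    (hbu.sub (hu₂.of_le one_le_two) (huh.of_le one_le_two) hbuh)
    (hbu.sub (hu₂.of_le one_le_two) (hus.of_le one_le_two) hbus) ?_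
  convert hGal _ (Vh.sub_mem hs hmem) using 2 <;>
    (funext x; simp only [Prod.fst_sub, Prod.snd_sub, Pi.sub_apply]; ring)

/-- Robust quasi-optimality of the Galerkin scheme in the balanced norm. -/
theorem quasi_optimality (lam : ℝ) (hlam : 3 ≤ lam) :
    ∃ C > 0, ∀ ε ∈ Ioc (0:ℝ) 1,
      ∀ u : ℝ → ℝ, ContDiffOn ℝ 4 u (Icc (0:ℝ) 1) → ClampedBC u →
      ∀ Vh : Submodule ℝ ((ℝ → ℝ) × (ℝ → ℝ)),
        (∀ wz ∈ Vh, ContDiffOn ℝ 2 wz.1 (Icc (0:ℝ) 1) ∧ ClampedBC wz.1 ∧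
          ContDiffOn ℝ 2 wz.2 (Icc (0:ℝ) 1)) →
      ∀ uh vh : ℝ → ℝ, (uh, vh) ∈ Vh →
        (∀ wz ∈ Vh,
          Bform ε lam (fun x => u x - uh x)
            (fun x => ε ^ ((3:ℝ)/2) * Dn 2 u x - vh x) wz.1 wz.2 = 0) →
        -- first quasi-optimal estimate
        (∀ us vs : ℝ → ℝ, (us, vs) ∈ Vh →
          bal ε (fun x => u x - uh x) (fun x => ε ^ ((3:ℝ)/2) * Dn 2 u x - vh x)
            ≤ C * bal ε (fun x => u x - us x)
                (fun x => ε ^ ((3:ℝ)/2) * Dn 2 u x - vs x)) ∧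
        -- second estimate, for product spaces V_h = V_h^u × V_h^v
        (∀ Vhu Vhv : Submodule ℝ (ℝ → ℝ), Vh = Vhu.prod Vhv →
          ∀ us ∈ Vhu, ∀ vs ∈ Vhv,
            bal ε (fun x => u x - uh x) (fun x => ε ^ ((3:ℝ)/2) * Dn 2 u x - vh x)
              ≤ C * ((L2nrm (fun x => u x - us x)
                       + ε ^ ((3:ℝ)/2) * L2nrm (Dn 2 (fun x => u x - us x)))
                  + C * ε ^ ((3:ℝ)/2) *
                    (L2nrm (fun x => Dn 2 u x - vs x)
                       + ε^2 * L2nrm (fun x => Dn 4 u x - Dn 2 vs x)))) := by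
  refine ⟨2 * lam + 25, by linarith, ?_⟩
  rintro ε ⟨hε₀, hε₁⟩ u hu hbu Vh hVh uh vh hmem hGal
  have quasi_opt := fun us vs (hs : (us, vs) ∈ Vh) =>
    bal_galerkin_error_le hε₀.le hε₁ hlam hu hbu hVh hmem hGal hs
  refine ⟨quasi_opt, fun Vhu Vhv hprod us hus vs hvs => ?_⟩
  set a := ε ^ ((3:ℝ)/2)
  have hvs₂ : ContDiffOn ℝ 2 vs (Icc 0 1) :=
    (hVh (0, vs) (hprod ▸ Submodule.mem_prod.2 ⟨Vhu.zero_mem, hvs⟩)).2.2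
  have hU : ContDiffOn ℝ 2 (Dn 2 u) (Icc 0 1) := hu.contDiffOn_Dn (by norm_num)
  have hinterp := bal_interpolant_le hε₀.le hU hvs₂ (fun x => u x - us x)
  rw [Dn_Dn] at hinterp
  have hrest : 0 ≤ a * (L2nrm (fun x => Dn 2 u x - vs x)
      + ε ^ 2 * L2nrm (fun x => Dn 4 u x - Dn 2 vs x)) := by
    have := L2nrm_nonneg (fun x => Dn 2 u x - vs x)
    have := L2nrm_nonneg (fun x => Dn 4 u x - Dn 2 vs x)
    positivity
  calc _ ≤ (2 * lam + 25) * bal ε (fun x => u x - us x) (fun x => a * Dn 2 u x - (a • vs) x) :=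
        quasi_opt us (a • vs) (hprod ▸ Submodule.mem_prod.2 ⟨hus, Vhv.smul_mem a hvs⟩)
    _ ≤ _ := by
        gcongr
        nlinarith [mul_le_mul_of_nonneg_right (show 1 ≤ 2 * lam + 25 by linarith) hrest]
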